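/- Let G be an NB-irreducible graph with ρ(G) = Λ(G), and for 0 ≤ t ≤ 1 let M_t be the E⃗×E⃗ matrix with entries (M_t)_{e,f} = (Π_{e,f})^{1−t}·(B_{e,f})^t, i.e. (M_t)_{e,f} = outdeg(e)^{t−1} if e→f and 0 otherwise. Then the Perron eigenvalue satisfies ρ(M_t) = Λ(G)^t for all 0 ≤ t ≤ 1. -/

import Mathlib

set_option linter.unusedSectionVars false
set_option maxHeartbeats 1000000


open Finset Filter

namespace NB

variable {V : Type} [Fintype V] [DecidableEq V] (G : SimpleGraph V) [DecidableRel G.Adj]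

/-- Transition relation between darts: `e → f` iff the head of `e` is the tail of `f`
and `f` is not the reversal of `e`. -/
def Step (d e : G.Dart) : Prop := d.snd = e.fst ∧ e ≠ d.symm

instance (d e : G.Dart) : Decidable (Step G d e) :=
  inferInstanceAs (Decidable (d.snd = e.fst ∧ e ≠ d.symm))

/-- `outdeg(e) = deg(h(e)) - 1`. -/
def outdeg (d : G.Dart) : ℕ := G.degree d.snd - 1

/-- `indeg(e) = deg(t(e)) - 1`. -/
def indeg (d : G.Dart) : ℕ := G.degree d.fst - 1

/-- The non-backtracking adjacency matrix. -/
def B : Matrix G.Dart G.Dart ℝ := fun d e => if Step G d e then 1 else 0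

/-- The NBRW transition matrix. -/
noncomputable def transMat : Matrix G.Dart G.Dart ℝ :=
  fun d e => if Step G d e then ((outdeg G d : ℝ))⁻¹ else 0

/-- NB-irreducibility: connected, min degree ≥ 2, max degree > 2. -/
def NBIrreducible : Prop :=
  G.Connected ∧ (∀ v, 2 ≤ G.degree v) ∧ (∃ v, 2 < G.degree v)

/-- `Λ(G)`, the geometric mean of out-degrees over directed edges. -/
noncomputable def Lambda : ℝ :=
  (∏ d : G.Dart, (outdeg G d : ℝ)) ^ ((Fintype.card G.Dart : ℝ)⁻¹)

/-- The Perron (largest real) eigenvalue of a matrix. -/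
noncomputable def perron {n : Type} [Fintype n] (M : Matrix n n ℝ) : ℝ :=
  sSup {r : ℝ | ∃ v : n → ℝ, v ≠ 0 ∧ M.mulVec v = r • v}

/-- A length-`ℓ` non-backtracking walk is a sequence of `ℓ+1` darts with consecutive
transitions. -/
def IsNBWalk {ℓ : ℕ} (ω : Fin (ℓ + 1) → G.Dart) : Prop :=
  ∀ i : Fin ℓ, Step G (ω i.castSucc) (ω i.succ)

instance {ℓ : ℕ} (ω : Fin (ℓ + 1) → G.Dart) : Decidable (IsNBWalk G ω) :=
  inferInstanceAs (Decidable (∀ i : Fin ℓ, Step G (ω i.castSucc) (ω i.succ)))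

/-- The set `Ω_ℓ` of length-`ℓ` non-backtracking walks. -/
def NBWalk (ℓ : ℕ) : Type := {ω : Fin (ℓ + 1) → G.Dart // IsNBWalk G ω}

instance (ℓ : ℕ) : Fintype (NBWalk G ℓ) := Subtype.fintype _

/-- The NBRW probability of a walk, started from the uniform stationary distribution. -/
noncomputable def mu {ℓ : ℕ} (ω : NBWalk G ℓ) : ℝ :=
  (Fintype.card G.Dart : ℝ)⁻¹ * ∏ i : Fin ℓ, ((outdeg G (ω.1 i.castSucc) : ℝ))⁻¹

/-- Expectation over `Ω_ℓ` with respect to `μ`. -/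
noncomputable def expect {ℓ : ℕ} (X : NBWalk G ℓ → ℝ) : ℝ :=
  ∑ ω : NBWalk G ℓ, mu G ω * X ω

/-- Variance over `Ω_ℓ` with respect to `μ`. -/
noncomputable def var {ℓ : ℕ} (X : NBWalk G ℓ → ℝ) : ℝ :=
  expect G (fun ω => (X ω - expect G X) ^ 2)

/-- `R_ℓ(ω) = ∑ log₂ outdeg(e_i)`: the number of random bits consumed. -/
noncomputable def bits {ℓ : ℕ} (ω : NBWalk G ℓ) : ℝ :=
  ∑ i : Fin ℓ, Real.logb 2 (outdeg G (ω.1 i.castSucc))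

/-- A suspended path `(e_0, …, e_n)` (of length `n+1`). -/
def IsSuspendedPath {n : ℕ} (P : Fin (n + 1) → G.Dart) : Prop :=
  (∀ i : Fin n, Step G (P i.castSucc) (P i.succ)) ∧
  (∀ i : Fin n, outdeg G (P i.castSucc) = 1) ∧
  1 < outdeg G (P (Fin.last n)) ∧
  (∀ i : Fin n, indeg G (P i.succ) = 1) ∧
  1 < indeg G (P 0)

/-- The suspended path condition: `outdeg(P)·indeg(P) = Λ(G)^{2|P|}`. -/
noncomputable def SuspendedPathCondition : Prop :=
  ∀ (n : ℕ) (P : Fin (n + 1) → G.Dart), IsSuspendedPath G P →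
    (outdeg G (P (Fin.last n)) : ℝ) * (indeg G (P 0) : ℝ) = Lambda G ^ (2 * (n + 1))

/-- A non-backtracking cycle `(e_0, …, e_n)` (of length `n+1`). -/
def IsNBCycle {n : ℕ} (C : Fin (n + 1) → G.Dart) : Prop :=
  ∀ i : Fin (n + 1), Step G (C i) (C (i + 1))

/-- The cycle condition: `∏_{e∈C} outdeg(e) = Λ(G)^{|C|}`. -/
noncomputable def CycleCondition : Prop :=
  ∀ (n : ℕ) (C : Fin (n + 1) → G.Dart), IsNBCycle G C →
    (∏ i : Fin (n + 1), (outdeg G (C i) : ℝ)) = Lambda G ^ (n + 1)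



section Aux

section DartLemmas
variable {G}

lemma step_symm {d e : G.Dart} (h : Step G d e) : Step G e.symm d.symm := by
  obtain ⟨h1, h2⟩ := h
  refine ⟨by simp [h1], ?_⟩
  intro hc
  simp only [SimpleGraph.Dart.symm_symm] at hc
  exact h2 hc.symm

lemma step_symm_iff {d e : G.Dart} : Step G e.symm d.symm ↔ Step G d e := by
  constructor
  · intro h; simpa using step_symm h
  · exact step_symm

/-- successors of a dart -/
def succs (d : G.Dart) : Finset G.Dart := {e : G.Dart | Step G d e}

lemma mem_succs {d e : G.Dart} : e ∈ succs d ↔ Step G d e := by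
  simp [succs]

/-- dart with given tail and head -/
def mkDart {u w : V} (h : G.Adj u w) : G.Dart := ⟨(u, w), h⟩

lemma card_succs (d : G.Dart) : (succs d).card = outdeg G d := by
  classical
  have hmap : succs d = (G.neighborFinset d.snd \ {d.fst}).image
      (fun w => if h : G.Adj d.snd w then mkDart h else d) := by
    ext e
    simp only [mem_succs, Step, Finset.mem_image, Finset.mem_sdiff,
      SimpleGraph.mem_neighborFinset, Finset.mem_singleton]
    constructor
    · rintro ⟨h1, h2⟩
      refine ⟨e.snd, ⟨h1 ▸ e.adj, ?_⟩, ?_⟩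
      · intro hc
        apply h2
        ext <;> simp [← h1, hc]
      · rw [dif_pos (h1 ▸ e.adj)]
        ext <;> simp [mkDart, ← h1]
    · rintro ⟨w, ⟨hw, hwne⟩, rfl⟩
      rw [dif_pos hw]
      refine ⟨rfl, fun hc => hwne ?_⟩
      have := congrArg (fun x : _root_.SimpleGraph.Dart G => x.snd) hc
      simpa [mkDart] using this
  rw [hmap, Finset.card_image_of_injOn, Finset.card_sdiff_of_subset (by simp [d.adj.symm]),
    SimpleGraph.card_neighborFinset_eq_degree]
  · simp [outdeg]
  · intro x hx y hy hxy
    have hx' := (Finset.mem_sdiff.mp hx).1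
    have hy' := (Finset.mem_sdiff.mp hy).1
    rw [SimpleGraph.mem_neighborFinset] at hx' hy'
    dsimp only at hxy
    rw [dif_pos hx', dif_pos hy'] at hxy
    have := congrArg (fun z : G.Dart => z.snd) hxy
    simpa [mkDart] using this

/-- predecessors of a dart -/
def preds (e : G.Dart) : Finset G.Dart := {d : G.Dart | Step G d e}

lemma mem_preds {d e : G.Dart} : d ∈ preds e ↔ Step G d e := by simp [preds]

lemma card_preds (e : G.Dart) : (preds e).card = indeg G e := by
  classical
  have : preds e = (succs e.symm).image SimpleGraph.Dart.symm := by
    ext d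
    simp only [mem_preds, Finset.mem_image, mem_succs]
    constructor
    · intro h
      exact ⟨d.symm, by simpa using step_symm h, by simp⟩
    · rintro ⟨g, hg, rfl⟩
      have := step_symm hg
      simpa using this
  rw [this, Finset.card_image_of_injective _ (SimpleGraph.Dart.symm_involutive.injective),
    card_succs]
  simp [outdeg, indeg]
  rfl

lemma outdeg_eq_of_step {d e : G.Dart} (h : Step G d e) : outdeg G d = indeg G e := by
  unfold outdeg indeg
  rw [h.1]


-- new material
def Reach : G.Dart → G.Dart → Prop := Relation.ReflTransGen (Step G)

lemma reach_symm {d e : G.Dart} (h : Reach d e) : Reach e.symm d.symm := by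
  induction h with
  | refl => exact Relation.ReflTransGen.refl
  | tail _ hbc ih => exact Relation.ReflTransGen.head (step_symm hbc) ih

lemma step_mk {g : G.Dart} {w : V} (h : G.Adj g.snd w) (hw : w ≠ g.fst) :
    Step G g (mkDart h) := by
  refine ⟨rfl, ?_⟩
  intro hc
  exact hw (congrArg (fun x : G.Dart => x.snd) hc)

lemma walk_closed {Z : Set V} (hZ : ∀ v ∈ Z, ∀ w, G.Adj v w → w ∈ Z)
    {a b : V} (p : G.Walk a b) (ha : a ∈ Z) : b ∈ Z := by
  induction p with
  | nil => exact ha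
  | cons h _ ih => exact ih (hZ _ ha _ h)

lemma succs_nonempty (hdeg : ∀ v, 2 ≤ G.degree v) (d : G.Dart) : (succs d).Nonempty := by
  rw [← Finset.card_pos, card_succs]
  have := hdeg d.snd
  unfold outdeg
  omega

/-- Claim H: from any dart, we can reach some dart and its reversal. -/
lemma exists_reach_pair (hconn : G.Connected) (hdeg : ∀ v, 2 ≤ G.degree v)
    (hbig : ∃ v, 2 < G.degree v) (f : G.Dart) :
    ∃ g, Reach f g ∧ Reach f g.symm := by
  classical
  by_contra hcon
  push_neg at hcon
  -- hcon : ∀ g, Reach f g → ¬ Reach f g.symm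
  set D : Finset G.Dart := {g : G.Dart | Reach f g} with hD
  have hmemD : ∀ g, g ∈ D ↔ Reach f g := by intro g; simp [hD]
  have hfD : f ∈ D := (hmemD f).mpr Relation.ReflTransGen.refl
  have hDstep : ∀ g ∈ D, ∀ e, Step G g e → e ∈ D := by
    intro g hg e hs
    exact (hmemD e).mpr (Relation.ReflTransGen.tail ((hmemD g).mp hg) hs)
  have hclose : ∀ g ∈ D, ∀ w (h : G.Adj g.snd w), w ≠ g.fst → mkDart h ∈ D := by
    intro g hg w h hw
    exact hDstep g hg _ (step_mk h hw)
  -- uniqueness of the dart entering a given head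
  have huniq : ∀ g ∈ D, ∀ g' ∈ D, g.snd = g'.snd → g = g' := by
    intro g hg g' hg' hsnd
    by_contra hne
    have hfst : g'.fst ≠ g.fst := by
      intro hc
      exact hne (SimpleGraph.Dart.ext _ _ (Prod.ext hc.symm hsnd))
    have hadj : G.Adj g.snd g'.fst := by
      have := g'.adj
      rw [← hsnd] at this
      exact this.symm
    have hmem := hclose g hg g'.fst hadj hfst
    have : mkDart hadj = g'.symm := by
      apply SimpleGraph.Dart.ext
      simp [mkDart, hsnd, Prod.ext_iff, Prod.fst_swap, Prod.snd_swap]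
    rw [this] at hmem
    exact hcon g' ((hmemD g').mp hg') ((hmemD _).mp hmem)
  -- children sets
  set C : G.Dart → Finset V := fun g => (G.neighborFinset g.snd).erase g.fst with hC
  have hcardC : ∀ g : G.Dart, (C g).card = G.degree g.snd - 1 := by
    intro g
    have hmm : g.fst ∈ G.neighborFinset g.snd := by
      rw [SimpleGraph.mem_neighborFinset]; exact g.adj.symm
    rw [hC]
    dsimp only
    rw [Finset.card_erase_of_mem hmm, SimpleGraph.card_neighborFinset_eq_degree]
  have hmemC : ∀ (g : G.Dart) (w : V), w ∈ C g ↔ (G.Adj g.snd w ∧ w ≠ g.fst) := by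
    intro g w
    rw [hC]
    simp only [Finset.mem_erase, SimpleGraph.mem_neighborFinset]
    tauto
  set U : Finset V := D.image (fun g : G.Dart => g.snd) with hU
  have hCU : ∀ g ∈ D, C g ⊆ U := by
    intro g hg w hw
    rw [hmemC] at hw
    have := hclose g hg w hw.1 hw.2
    rw [hU]
    exact Finset.mem_image.mpr ⟨_, this, rfl⟩
  have hdisj : (D : Set G.Dart).Pairwise (fun g g' => Disjoint (C g) (C g')) := by
    intro g hg g' hg' hne
    rw [Finset.disjoint_left]
    intro w hw hw'
    rw [hmemC] at hw hw'
    have h1 := hclose g (by simpa using hg) w hw.1 hw.2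
    have h2 := hclose g' (by simpa using hg') w hw'.1 hw'.2
    have : mkDart hw.1 = mkDart hw'.1 := huniq _ h1 _ h2 rfl
    have hss : g.snd = g'.snd := congrArg (fun x : G.Dart => x.fst) this
    exact hne (huniq g (by simpa using hg) g' (by simpa using hg') hss)
  have hsum : ∑ g ∈ D, (C g).card ≤ U.card := by
    rw [← Finset.card_biUnion (fun g hg g' hg' hne => hdisj (by simpa using hg) (by simpa using hg') hne)]
    exact Finset.card_le_card (Finset.biUnion_subset.mpr hCU)
  have hUD : U.card = D.card := by
    rw [hU]
    exact Finset.card_image_of_injOn (fun g hg g' hg' h => huniq g (by simpa using hg) g' (by simpa using hg') h)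
  by_cases hA : ∃ g ∈ D, 2 < G.degree g.snd
  · -- counting contradiction
    obtain ⟨g0, hg0, hg0deg⟩ := hA
    have hlt : D.card < ∑ g ∈ D, (C g).card := by
      calc D.card = ∑ _g ∈ D, 1 := by simp
      _ < ∑ g ∈ D, (C g).card := by
          apply Finset.sum_lt_sum
          · intro i hi
            rw [hcardC]
            have := hdeg i.snd
            omega
          · exact ⟨g0, hg0, by rw [hcardC]; omega⟩
    exact absurd (hlt.trans_le (hsum.trans_eq hUD)) (lt_irrefl _)
  · -- all heads in D have degree exactly 2
    push_neg at hA
    have hdeg2 : ∀ g ∈ D, G.degree g.snd = 2 := by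
      intro g hg
      have h1 := hdeg g.snd
      have h2 := hA g hg
      omega
    -- iterate the (choice of) successor function
    set cnext : G.Dart → G.Dart := fun g => (succs_nonempty hdeg g).choose with hcnext
    have hcstep : ∀ g, Step G g (cnext g) := by
      intro g
      have := (succs_nonempty hdeg g).choose_spec
      rw [mem_succs] at this
      exact this
    have horbD : ∀ k, cnext^[k] f ∈ D := by
      intro k
      induction k with
      | zero => exact hfD
      | succ n ih =>
          rw [Function.iterate_succ_apply']
          exact hDstep _ ih _ (hcstep _)
    obtain ⟨i, j, hij, hfij⟩ := Finite.exists_ne_map_eq_of_infinite (fun k : ℕ => cnext^[k] f)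
    wlog hlt : i < j generalizing i j
    · exact this j i hij.symm hfij.symm (by omega)
    set z : G.Dart := cnext^[i] f with hz
    set m : ℕ := j - i with hm
    have hm1 : 1 ≤ m := by omega
    have hper : cnext^[m] z = z := by
      rw [hz, ← Function.iterate_add_apply]
      have : m + i = j := by omega
      rw [this]
      exact hfij.symm
    have horbz : ∀ k, cnext^[k] z ∈ D := by
      intro k
      rw [hz, ← Function.iterate_add_apply]
      exact horbD _
    -- every orbit element is cnext of an orbit element
    have hpre : ∀ k, ∃ k', cnext^[k' + 1] z = cnext^[k] z := by
      intro k
      cases k with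
      | zero => exact ⟨m - 1, by rw [show m - 1 + 1 = m by omega]; exact hper⟩
      | succ n => exact ⟨n, rfl⟩
    set Z : Set V := {v | ∃ k, (cnext^[k] z).snd = v} with hZ
    have hZclosed : ∀ v ∈ Z, ∀ w, G.Adj v w → w ∈ Z := by
      rintro v ⟨k, hk⟩ w hadj
      -- N(v) = {fst of g_k, snd of g_{k+1}}
      set g := cnext^[k] z with hg
      have hgD := horbz k
      have hstep := hcstep g
      have h1 : (cnext g).fst = g.snd := hstep.1.symm
      have h2 : (cnext g).snd ≠ g.fst := by
        intro hc
        exact hstep.2 (SimpleGraph.Dart.ext _ _ (Prod.ext h1 hc))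
      have hNcard : (G.neighborFinset g.snd).card = 2 := by
        rw [SimpleGraph.card_neighborFinset_eq_degree]; exact hdeg2 g hgD
      have hmem1 : g.fst ∈ G.neighborFinset g.snd := by
        rw [SimpleGraph.mem_neighborFinset]; exact g.adj.symm
      have hmem2 : (cnext g).snd ∈ G.neighborFinset g.snd := by
        rw [SimpleGraph.mem_neighborFinset, ← h1]; exact (cnext g).adj
      have hpair : ({g.fst, (cnext g).snd} : Finset V).card = 2 := by
        rw [Finset.card_insert_of_notMem (by simp [h2.symm]), Finset.card_singleton]
      have hNeq : ({g.fst, (cnext g).snd} : Finset V) = G.neighborFinset g.snd := by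
        apply Finset.eq_of_subset_of_card_le
        · intro y hy
          simp only [Finset.mem_insert, Finset.mem_singleton] at hy
          rcases hy with rfl | rfl
          · exact hmem1
          · exact hmem2
        · rw [hNcard, hpair]
      have hwmem : w ∈ ({g.fst, (cnext g).snd} : Finset V) := by
        rw [hNeq, SimpleGraph.mem_neighborFinset, hk]
        exact hadj
      simp only [Finset.mem_insert, Finset.mem_singleton] at hwmem
      rcases hwmem with rfl | rfl
      · -- w = g.fst : use a predecessor in the orbit
        obtain ⟨k', hk'⟩ := hpre k
        refine ⟨k', ?_⟩
        have h3 : cnext^[k' + 1] z = cnext (cnext^[k'] z) := Function.iterate_succ_apply' _ _ _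
        have h4 : (cnext (cnext^[k'] z)).fst = (cnext^[k'] z).snd := (hcstep _).1.symm
        rw [← h3, hk'] at h4
        rw [hg]
        exact h4.symm
      · exact ⟨k + 1, by rw [Function.iterate_succ_apply']⟩
    -- conclude case B
    obtain ⟨vbig, hvbig⟩ := hbig
    have hzZ : z.snd ∈ Z := ⟨0, rfl⟩
    obtain ⟨p⟩ := hconn z.snd vbig
    have hvZ : vbig ∈ Z := walk_closed hZclosed p hzZ
    obtain ⟨k, hk⟩ := hvZ
    have := hdeg2 _ (horbz k)
    rw [hk] at this
    omega

lemma reach_turnaround (hconn : G.Connected) (hdeg : ∀ v, 2 ≤ G.degree v)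
    (hbig : ∃ v, 2 < G.degree v) (d : G.Dart) : Reach d d.symm := by
  obtain ⟨g, h1, h2⟩ := exists_reach_pair hconn hdeg hbig d
  exact h2.trans (reach_symm h1)

lemma reach_head (hconn : G.Connected) (hdeg : ∀ v, 2 ≤ G.degree v)
    (hbig : ∃ v, 2 < G.degree v) {a b : V} (p : G.Walk a b) :
    ∀ d : G.Dart, d.snd = a → ∃ e : G.Dart, e.snd = b ∧ Reach d e := by
  induction p with
  | nil => exact fun d hd => ⟨d, hd, Relation.ReflTransGen.refl⟩
  | @cons u v w h q ih =>
    intro d hd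
    by_cases hc : v = d.fst
    · have hds : d.symm.snd = v := by simp [hc]
      obtain ⟨e, he, hre⟩ := ih d.symm hds
      exact ⟨e, he, (reach_turnaround hconn hdeg hbig d).trans hre⟩
    · have hadj : G.Adj d.snd v := hd ▸ h
      have hstep := step_mk hadj hc
      obtain ⟨e, he, hre⟩ := ih (mkDart hadj) rfl
      exact ⟨e, he, (Relation.ReflTransGen.single hstep).trans hre⟩

/-- Strong connectivity of the non-backtracking dart digraph. -/
lemma reach_all (hconn : G.Connected) (hdeg : ∀ v, 2 ≤ G.degree v)
    (hbig : ∃ v, 2 < G.degree v) (d e : G.Dart) : Reach d e := by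
  obtain ⟨p⟩ := hconn d.snd e.fst
  obtain ⟨g, hg, hreach⟩ := reach_head hconn hdeg hbig p d rfl
  by_cases hc : e = g.symm
  · subst hc
    exact hreach.trans (reach_turnaround hconn hdeg hbig g)
  · exact hreach.tail ⟨hg, hc⟩

lemma succs_eq_filter {d : G.Dart} : succs d = Finset.univ.filter (fun e => Step G d e) := rfl

lemma preds_eq_filter {e : G.Dart} : preds e = Finset.univ.filter (fun d => Step G d e) := rfl


end DartLemmas

section MatrixLemmas
variable {n : Type} [Fintype n] [DecidableEq n]

lemma pow_entry_nonneg {M : Matrix n n ℝ} (hM : ∀ i j, 0 ≤ M i j) (k : ℕ) :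
    ∀ i j, 0 ≤ (M ^ k) i j := by
  induction k with
  | zero =>
    intro i j
    by_cases h : i = j <;> simp [pow_zero, Matrix.one_apply, h]
  | succ m ih =>
    intro i j
    rw [pow_succ, Matrix.mul_apply]
    exact Finset.sum_nonneg fun l _ => mul_nonneg (ih i l) (hM l j)

lemma pow_entry_pos_of_chain {M : Matrix n n ℝ} (hM : ∀ i j, 0 ≤ M i j)
    {R : n → n → Prop} (hR : ∀ i j, R i j → 0 < M i j) {a b : n}
    (h : Relation.ReflTransGen R a b) : ∃ k, 0 < (M ^ k) a b := by
  induction h with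
  | refl => exact ⟨0, by simp [pow_zero, Matrix.one_apply]⟩
  | @tail b c _ hbc ih =>
    obtain ⟨k, hk⟩ := ih
    refine ⟨k + 1, ?_⟩
    rw [pow_succ, Matrix.mul_apply]
    apply Finset.sum_pos' (fun l _ => mul_nonneg (pow_entry_nonneg hM k a l) (hM l c))
    exact ⟨b, Finset.mem_univ b, mul_pos hk (hR _ _ hbc)⟩

/-- Collatz–Wielandt style upper bound: a positive super-eigenvector bounds all
real eigenvalues. -/
lemma eig_le_of_pos_supereig {M : Matrix n n ℝ} (hM : ∀ i j, 0 ≤ M i j)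
    {w : n → ℝ} (hw : ∀ i, 0 < w i) {lam : ℝ} (hlam : 0 ≤ lam)
    (hsub : ∀ i, M.mulVec w i ≤ lam * w i)
    {r : ℝ} {u : n → ℝ} (hu : u ≠ 0) (heig : M.mulVec u = r • u) : r ≤ lam := by
  rcases le_or_gt r 0 with h | hr
  · exact h.trans hlam
  -- pick i0 maximizing |u i| / w i
  have hne : (Finset.univ : Finset n).Nonempty := by
    rcases Function.ne_iff.mp hu with ⟨i, _⟩
    exact ⟨i, Finset.mem_univ i⟩
  obtain ⟨i0, _, hmax⟩ := Finset.exists_max_image Finset.univ (fun i => |u i| / w i) hne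
  set κ := |u i0| / w i0 with hκ
  have hbound : ∀ i, |u i| ≤ κ * w i := fun i =>
    (div_le_iff₀ (hw i)).mp (hmax i (Finset.mem_univ i))
  have hκpos : 0 < κ := by
    rcases Function.ne_iff.mp hu with ⟨i, hi⟩
    have h1 : 0 < |u i| := abs_pos.mpr hi
    have h2 : |u i| / w i ≤ κ := hmax i (Finset.mem_univ i)
    have := div_pos h1 (hw i)
    linarith
  have key : r * (κ * w i0) ≤ lam * (κ * w i0) := by
    have h1 : r * |u i0| = |M.mulVec u i0| := by
      rw [heig]
      simp only [Pi.smul_apply, smul_eq_mul, abs_mul, abs_of_pos hr]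
    have h2 : |M.mulVec u i0| ≤ κ * M.mulVec w i0 := by
      rw [Matrix.mulVec, Matrix.mulVec, dotProduct, dotProduct]
      calc |∑ j, M i0 j * u j| ≤ ∑ j, |M i0 j * u j| := Finset.abs_sum_le_sum_abs _ _
      _ ≤ ∑ j, M i0 j * (κ * w j) := by
          apply Finset.sum_le_sum
          intro j _
          rw [abs_mul, abs_of_nonneg (hM i0 j)]
          exact mul_le_mul_of_nonneg_left (hbound j) (hM i0 j)
      _ = κ * ∑ j, M i0 j * w j := by
          rw [Finset.mul_sum]
          congr 1
          ext j
          ring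
    have h3 : κ * M.mulVec w i0 ≤ κ * (lam * w i0) :=
      mul_le_mul_of_nonneg_left (hsub i0) hκpos.le
    have h4 : |u i0| = κ * w i0 := by
      rw [hκ, div_mul_cancel₀ _ (hw i0).ne']
    calc r * (κ * w i0) = r * |u i0| := by rw [h4]
    _ = |M.mulVec u i0| := h1
    _ ≤ κ * M.mulVec w i0 := h2
    _ ≤ κ * (lam * w i0) := h3
    _ = lam * (κ * w i0) := by ring
  have hpos : 0 < κ * w i0 := mul_pos hκpos (hw i0)
  exact le_of_mul_le_mul_right (by linarith [key]) hpos


theorem perron_exists [Nonempty n] {M : Matrix n n ℝ} (hM : ∀ i j, 0 ≤ M i j)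
    (hirr : ∀ i j, ∃ k, 0 < (M ^ k) i j)
    (hpow : ∀ (k : ℕ) (i j : n), 0 ≤ (M ^ k) i j) :
    ∃ (lam : ℝ) (x : n → ℝ), 0 ≤ lam ∧ (∀ i, 0 < x i) ∧ M.mulVec x = lam • x := by
  classical
  -- the auxiliary strictly positive matrix A = ∑_{k<K} M^k
  set K : ℕ := (Finset.univ : Finset (n × n)).sup (fun p => Nat.find (hirr p.1 p.2)) + 1 with hK
  have hKlt : ∀ i j, Nat.find (hirr i j) < K := by
    intro i j
    have : Nat.find (hirr i j) ≤ (Finset.univ : Finset (n × n)).sup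
        (fun p => Nat.find (hirr p.1 p.2)) :=
      Finset.le_sup (f := fun p : n × n => Nat.find (hirr p.1 p.2)) (Finset.mem_univ (i, j))
    omega
  set A : Matrix n n ℝ := ∑ k ∈ Finset.range K, M ^ k with hA
  have hAapp : ∀ i j, A i j = ∑ k ∈ Finset.range K, (M ^ k) i j := by
    intro i j
    rw [hA]
    simp [Matrix.sum_apply]
  have hApos : ∀ i j, 0 < A i j := by
    intro i j
    rw [hAapp]
    apply Finset.sum_pos' (fun k _ => hpow k i j)
    exact ⟨Nat.find (hirr i j), Finset.mem_range.mpr (hKlt i j), Nat.find_spec (hirr i j)⟩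
  have hcomm : M * A = A * M := by
    rw [hA, Matrix.mul_sum, Matrix.sum_mul]
    exact Finset.sum_congr rfl fun k _ => (pow_mul_comm' M k).symm
  -- positivity transfer through A
  have hAmul : ∀ (v : n → ℝ), (∀ i, 0 ≤ v i) → v ≠ 0 → ∀ i, 0 < A.mulVec v i := by
    intro v hv hvne i
    obtain ⟨j, hj⟩ := Function.ne_iff.mp hvne
    have hvj : 0 < v j := lt_of_le_of_ne (hv j) (by simpa using (Ne.symm hj))
    rw [Matrix.mulVec, dotProduct]
    apply Finset.sum_pos' (fun l _ => mul_nonneg (hApos i l).le (hv l))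
    exact ⟨j, Finset.mem_univ j, mul_pos (hApos i j) hvj⟩
  -- the feasibility bound
  set NN : ℝ := (Fintype.card n : ℝ) with hNN
  have hNNpos : 0 < NN := by
    rw [hNN]
    exact_mod_cast Fintype.card_pos
  set Cb : ℝ := ∑ i, ∑ j, M i j with hCb
  have hCbnn : 0 ≤ Cb := Finset.sum_nonneg fun i _ => Finset.sum_nonneg fun j _ => hM i j
  set C : ℝ := NN * Cb with hC
  have feas_le : ∀ (lam : ℝ) (x : n → ℝ), 0 ≤ lam → (∀ i, 0 ≤ x i) → (∑ i, x i) = 1 →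
      (∀ i, lam * x i ≤ M.mulVec x i) → lam ≤ C := by
    intro lam x hlam hx hsum hfeas
    obtain ⟨i, _, hmax⟩ := Finset.exists_max_image Finset.univ x Finset.univ_nonempty
    have hxi : 1 ≤ NN * x i := by
      have : ∑ j, x j ≤ Fintype.card n • x i := by
        apply Finset.sum_le_card_nsmul
        intro j _
        exact hmax j (Finset.mem_univ j)
      rw [hsum] at this
      simpa [hNN, nsmul_eq_mul] using this
    have hxle1 : ∀ j, x j ≤ 1 := by
      intro j
      rw [← hsum]
      exact Finset.single_le_sum (fun l _ => hx l) (Finset.mem_univ j)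
    have hMx : M.mulVec x i ≤ Cb := by
      rw [Matrix.mulVec, dotProduct]
      calc ∑ j, M i j * x j ≤ ∑ j, M i j := by
            apply Finset.sum_le_sum
            intro j _
            nlinarith [hM i j, hx j, hxle1 j]
      _ ≤ Cb := by
            rw [hCb]
            exact Finset.single_le_sum
              (fun l _ => Finset.sum_nonneg fun j _ => hM l j) (Finset.mem_univ i)
    calc lam = lam * 1 := by ring
    _ ≤ lam * (NN * x i) := by nlinarith
    _ = NN * (lam * x i) := by ring
    _ ≤ NN * M.mulVec x i := by nlinarith [hfeas i]
    _ ≤ NN * Cb := by nlinarith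
  -- the compact feasible set
  set S : Set ((n → ℝ) × ℝ) := {p | (∀ i, 0 ≤ p.1 i) ∧ (∑ i, p.1 i) = 1 ∧ 0 ≤ p.2 ∧
      ∀ i, p.2 * p.1 i ≤ M.mulVec p.1 i} with hS
  have hmulVec_cont : ∀ i : n, Continuous (fun p : (n → ℝ) × ℝ => M.mulVec p.1 i) := by
    intro i
    simp only [Matrix.mulVec, dotProduct]
    exact continuous_finset_sum _ fun j _ =>
      (continuous_const.mul ((continuous_apply j).comp continuous_fst))
  have hSclosed : IsClosed S := by
    have hSeq : S = ({p : (n → ℝ) × ℝ | ∀ i, 0 ≤ p.1 i} ∩ ({p | (∑ i, p.1 i) = 1} ∩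
        ({p | 0 ≤ p.2} ∩ {p | ∀ i, p.2 * p.1 i ≤ M.mulVec p.1 i}))) := by
      ext p
      simp only [hS, Set.mem_setOf_eq, Set.mem_inter_iff, and_assoc]
    rw [hSeq]
    refine IsClosed.inter ?_ (IsClosed.inter ?_ (IsClosed.inter ?_ ?_))
    · have h1 : {p : (n → ℝ) × ℝ | ∀ i, 0 ≤ p.1 i} =
          ⋂ i, {p : (n → ℝ) × ℝ | 0 ≤ p.1 i} := by ext p; simp
      rw [h1]
      exact isClosed_iInter fun i =>
        isClosed_le continuous_const ((continuous_apply i).comp continuous_fst)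
    · exact isClosed_eq (continuous_finset_sum _ fun j _ =>
        (continuous_apply j).comp continuous_fst) continuous_const
    · exact isClosed_le continuous_const continuous_snd
    · have h1 : {p : (n → ℝ) × ℝ | ∀ i, p.2 * p.1 i ≤ M.mulVec p.1 i} =
          ⋂ i, {p : (n → ℝ) × ℝ | p.2 * p.1 i ≤ M.mulVec p.1 i} := by ext p; simp
      rw [h1]
      exact isClosed_iInter fun i =>
        isClosed_le (continuous_snd.mul ((continuous_apply i).comp continuous_fst))
          (hmulVec_cont i)
  have hSbounded : Bornology.IsBounded S := by
    rw [Metric.isBounded_iff_subset_closedBall 0]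
    refine ⟨max 1 |C|, ?_⟩
    rintro ⟨x, lam⟩ ⟨h1, h2, h3, h4⟩
    rw [Metric.mem_closedBall, dist_zero_right, Prod.norm_def]
    apply max_le
    · apply (pi_norm_le_iff_of_nonneg (by positivity)).mpr
      intro i
      rw [Real.norm_eq_abs, abs_of_nonneg (h1 i)]
      have : x i ≤ 1 := by
        rw [← h2]
        exact Finset.single_le_sum (fun l _ => h1 l) (Finset.mem_univ i)
      exact le_max_of_le_left this
    · rw [Real.norm_eq_abs, abs_of_nonneg h3]
      exact le_max_of_le_right ((feas_le lam x h3 h1 h2 h4).trans (le_abs_self C))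
  have hScompact : IsCompact S := Metric.isCompact_of_isClosed_isBounded hSclosed hSbounded
  have hSne : S.Nonempty := by
    refine ⟨(fun _ => NN⁻¹, 0), fun i => by positivity, ?_, le_refl 0, ?_⟩
    · simp [hNN, Finset.card_univ]
    · intro i
      simp only [zero_mul]
      rw [Matrix.mulVec, dotProduct]
      exact Finset.sum_nonneg fun j _ => mul_nonneg (hM i j) (by positivity)
  obtain ⟨⟨x, lam⟩, hpS, hpmax⟩ := hScompact.exists_isMaxOn hSne continuous_snd.continuousOn
  obtain ⟨hx0, hxsum, hlam0, hfeas⟩ := hpS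
  have hxne : x ≠ 0 := by
    intro hc
    rw [hc] at hxsum
    simp at hxsum
  -- y = Mx - lam x ≥ 0
  have hy : ∀ i, 0 ≤ M.mulVec x i - lam * x i := fun i => sub_nonneg.mpr (hfeas i)
  by_cases hyzero : M.mulVec x = lam • x
  · -- eigenvector; positivity via A
    have hxipos : ∀ i, 0 < x i := by
      have hAx : ∀ i, 0 < A.mulVec x i := hAmul x hx0 hxne
      have hMk : ∀ k : ℕ, (M ^ k).mulVec x = (lam ^ k) • x := by
        intro k
        induction k with
        | zero => simp
        | succ m ih =>
            rw [pow_succ, ← Matrix.mulVec_mulVec, hyzero, Matrix.mulVec_smul, ih,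
              smul_smul, ← pow_succ']
      have hAxeq : A.mulVec x = (∑ k ∈ Finset.range K, lam ^ k) • x := by
        rw [hA]
        rw [show (∑ k ∈ Finset.range K, M ^ k).mulVec x
            = ∑ k ∈ Finset.range K, (M ^ k).mulVec x from by
          funext i
          simp only [Matrix.mulVec, dotProduct, Matrix.sum_apply, Finset.sum_mul,
            Finset.sum_apply]
          exact Finset.sum_comm]
        rw [Finset.sum_smul]
        exact Finset.sum_congr rfl fun k _ => hMk k
      have hspos : (0:ℝ) < ∑ k ∈ Finset.range K, lam ^ k := by
        apply Finset.sum_pos' (fun k _ => pow_nonneg hlam0 k)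
        refine ⟨0, Finset.mem_range.mpr (by omega), by simp⟩
      intro i
      have := hAx i
      rw [hAxeq] at this
      simp only [Pi.smul_apply, smul_eq_mul] at this
      nlinarith
    exact ⟨lam, x, hlam0, hxipos, hyzero⟩
  · -- strict subinvariance somewhere: contradiction with maximality
    exfalso
    set y : n → ℝ := M.mulVec x - lam • x with hydef
    have hyne : y ≠ 0 := by
      intro hc
      apply hyzero
      have := congrArg (fun v => v + lam • x) hc
      simpa [hydef] using this
    have hynn : ∀ i, 0 ≤ y i := by
      intro i
      rw [hydef]
      simpa using hy i
    set z : n → ℝ := A.mulVec x with hz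
    have hzpos : ∀ i, 0 < z i := hAmul x hx0 hxne
    have hAypos : ∀ i, 0 < A.mulVec y i := hAmul y hynn hyne
    have hMz : M.mulVec z = lam • z + A.mulVec y := by
      rw [hz, Matrix.mulVec_mulVec, hcomm, ← Matrix.mulVec_mulVec]
      have : M.mulVec x = lam • x + y := by rw [hydef]; abel
      rw [this, Matrix.mulVec_add, Matrix.mulVec_smul]
    have hMzgt : ∀ i, lam * z i < M.mulVec z i := by
      intro i
      rw [hMz]
      simp only [Pi.add_apply, Pi.smul_apply, smul_eq_mul]
      linarith [hAypos i]
    obtain ⟨i1, _, hmin⟩ := Finset.exists_min_image Finset.univ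
      (fun i => M.mulVec z i / z i) Finset.univ_nonempty
    set lam' : ℝ := M.mulVec z i1 / z i1 with hlam'
    have hlam'gt : lam < lam' := by
      rw [hlam', lt_div_iff₀ (hzpos i1)]
      linarith [hMzgt i1]
    have hlam'nn : 0 ≤ lam' := le_trans hlam0 hlam'gt.le
    have hfeas' : ∀ i, lam' * z i ≤ M.mulVec z i := by
      intro i
      have h1 : lam' ≤ M.mulVec z i / z i := hmin i (Finset.mem_univ i)
      rw [le_div_iff₀ (hzpos i)] at h1
      linarith
    set σ : ℝ := ∑ i, z i with hσ
    have hσpos : 0 < σ := Finset.sum_pos (fun i _ => hzpos i) Finset.univ_nonempty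
    have hmem : (σ⁻¹ • z, lam') ∈ S := by
      refine ⟨fun i => by
        simp only [Pi.smul_apply, smul_eq_mul]
        exact mul_nonneg (by positivity) (hzpos i).le, ?_, hlam'nn, ?_⟩
      · simp only [Pi.smul_apply, smul_eq_mul, ← Finset.mul_sum, ← hσ]
        field_simp
      · intro i
        rw [Matrix.mulVec_smul]
        simp only [Pi.smul_apply, smul_eq_mul]
        have := hfeas' i
        have hσinv : 0 ≤ σ⁻¹ := by positivity
        nlinarith
    have hle := hpmax hmem
    simp only [Set.mem_setOf_eq] at hle
    change lam' ≤ lam at hle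
    linarith


lemma perron_eq_of_eig [Nonempty n] {M : Matrix n n ℝ}
    (hM : ∀ i j, 0 ≤ M i j) {w : n → ℝ} {lam : ℝ} (hw : ∀ i, 0 < w i) (hlam : 0 ≤ lam)
    (heig : M.mulVec w = lam • w) : perron M = lam := by
  have hwne : w ≠ 0 := by
    intro hc
    have h1 := hw (Classical.arbitrary n)
    rw [hc] at h1
    simp at h1
  apply IsGreatest.csSup_eq
  constructor
  · exact ⟨w, hwne, heig⟩
  · rintro r ⟨u, hu, hue⟩
    exact eig_le_of_pos_supereig hM hw hlam
      (fun i => by rw [heig]; simp) hu hue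


end MatrixLemmas

end Aux

/-- If `ρ(G) = Λ(G)`, then for `0 ≤ t ≤ 1` the interpolated matrix
`M_t` (with entries `outdeg(e)^{t-1}` on transitions) has Perron eigenvalue
`Λ(G)^t`. -/
theorem perron_interpolation (h : NBIrreducible G)
    (heq : perron (B G) = Lambda G) :
    ∀ t : ℝ, 0 ≤ t → t ≤ 1 →
      perron (fun d e : G.Dart =>
          if Step G d e then (outdeg G d : ℝ) ^ (t - 1) else 0) =
        Lambda G ^ t := by
  intro t ht0 ht1
  obtain ⟨hconn, hdeg, hbig⟩ := h
  have hne : Nonempty G.Dart := by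
    obtain ⟨v, hv⟩ := hbig
    have h1 : 0 < G.degree v := by omega
    rw [← SimpleGraph.card_neighborFinset_eq_degree] at h1
    obtain ⟨w, hw⟩ := Finset.card_pos.mp h1
    exact ⟨mkDart ((SimpleGraph.mem_neighborFinset _ _ _).mp hw)⟩
  set dd : G.Dart → ℝ := fun e => (outdeg G e : ℝ) with hdd
  have houtpos : ∀ e : G.Dart, 0 < dd e := by
    intro e
    have h1 : 1 ≤ outdeg G e := by
      have := hdeg e.snd
      unfold outdeg
      omega
    rw [hdd]
    show (0:ℝ) < (outdeg G e : ℝ)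
    exact_mod_cast h1
  have hB0 : ∀ d e : G.Dart, 0 ≤ B G d e := by
    intro d e
    unfold B
    split <;> norm_num
  have hBR : ∀ d e : G.Dart, Step G d e → 0 < B G d e := by
    intro d e hs
    unfold B
    rw [if_pos hs]
    norm_num
  have hirr : ∀ d e : G.Dart, ∃ k, 0 < ((B G) ^ k) d e := fun d e =>
    pow_entry_pos_of_chain hB0 hBR (reach_all hconn hdeg hbig d e)
  obtain ⟨lam, v, hlam0, hv, heigB⟩ := perron_exists hB0 hirr (fun k => pow_entry_nonneg hB0 k)
  have hperB : perron (B G) = lam := perron_eq_of_eig hB0 hv hlam0 heigB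
  rw [hperB] at heq
  subst heq
  set Λ : ℝ := Lambda G with hΛdef
  have hΛpos : 0 < Λ := by
    rw [hΛdef]
    unfold Lambda
    apply Real.rpow_pos_of_pos
    exact Finset.prod_pos (fun e _ => houtpos e)
  -- componentwise eigen-equation
  have heigc : ∀ e : G.Dart, ∑ f ∈ succs e, v f = Λ * v e := by
    intro e
    have h1 := congrFun heigB e
    rw [Matrix.mulVec, dotProduct] at h1
    have h2 : ∑ f, B G e f * v f = ∑ f ∈ succs e, v f := by
      rw [succs_eq_filter, Finset.sum_filter]
      apply Finset.sum_congr rfl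
      intro f _
      unfold B
      split <;> simp
    rw [h2] at h1
    rw [h1]
    simp [mul_comm]
  -- the degree of predecessors
  have hDfpos : ∀ f : G.Dart, 0 < ((indeg G f : ℝ)) := by
    intro f
    have h1 : 1 ≤ indeg G f := by
      have := hdeg f.fst
      unfold indeg
      omega
    exact_mod_cast h1
  -- column sums of the transition matrix are 1 (suitably weighted swap identity)
  have hswap : ∑ e : G.Dart, (dd e)⁻¹ * (∑ f ∈ succs e, Real.log (v f))
      = ∑ f : G.Dart, Real.log (v f) := by
    have h1 : ∀ e : G.Dart, (dd e)⁻¹ * (∑ f ∈ succs e, Real.log (v f))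
        = ∑ f, (if Step G e f then (dd e)⁻¹ * Real.log (v f) else 0) := by
      intro e
      rw [Finset.mul_sum, succs_eq_filter, Finset.sum_filter]
    rw [Finset.sum_congr rfl (fun e _ => h1 e), Finset.sum_comm]
    apply Finset.sum_congr rfl
    intro f _
    have h2 : ∑ e, (if Step G e f then (dd e)⁻¹ * Real.log (v f) else 0)
        = ∑ e ∈ preds f, (dd e)⁻¹ * Real.log (v f) := by
      rw [preds_eq_filter, Finset.sum_filter]
    rw [h2]
    have h3 : ∀ e ∈ preds f, (dd e)⁻¹ * Real.log (v f)
        = ((indeg G f : ℝ))⁻¹ * Real.log (v f) := by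
      intro e he
      have h := outdeg_eq_of_step (mem_preds.mp he)
      show ((outdeg G e : ℝ))⁻¹ * Real.log (v f) = _
      rw [h]
    rw [Finset.sum_congr rfl h3, Finset.sum_const, card_preds, nsmul_eq_mul, ← mul_assoc,
      mul_inv_cancel₀ (hDfpos f).ne', one_mul]
  -- N log Λ = ∑ log dd
  have hlogΛ : (Fintype.card G.Dart : ℝ) * Real.log Λ = ∑ e : G.Dart, Real.log (dd e) := by
    have hprodpos : 0 < ∏ e : G.Dart, dd e := Finset.prod_pos (fun e _ => houtpos e)
    have hNpos : (0:ℝ) < (Fintype.card G.Dart : ℝ) := by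
      exact_mod_cast Fintype.card_pos
    have h1 : Real.log Λ = (Fintype.card G.Dart : ℝ)⁻¹ * Real.log (∏ e : G.Dart, dd e) := by
      rw [hΛdef]
      unfold Lambda
      exact Real.log_rpow hprodpos _
    rw [h1, Real.log_prod (fun e _ => (houtpos e).ne'), ← mul_assoc,
      mul_inv_cancel₀ hNpos.ne', one_mul]
  set c : G.Dart → ℝ := fun e => Λ * v e / dd e with hcdef
  have hcpos : ∀ e, 0 < c e := fun e => div_pos (mul_pos hΛpos (hv e)) (houtpos e)
  -- the per-dart Jensen-type inequality
  have hkey : ∀ e : G.Dart,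
      ((∑ f ∈ succs e, Real.log (v f)) ≤ dd e * Real.log (c e) ∧
        ((∃ f ∈ succs e, v f ≠ c e) →
          (∑ f ∈ succs e, Real.log (v f)) < dd e * Real.log (c e))) := by
    intro e
    have hsum : ∑ f ∈ succs e, v f / c e = dd e := by
      rw [← Finset.sum_div, heigc e, hcdef]
      field_simp
      rw [mul_comm (v e) (dd e), mul_div_assoc, div_self (hv e).ne',
        mul_one]
    have hcards : ((succs e).card : ℝ) = dd e := by
      rw [card_succs, hdd]
    have hterm : ∀ f ∈ succs e, Real.log (v f) - Real.log (c e) ≤ v f / c e - 1 := by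
      intro f _
      rw [← Real.log_div (hv f).ne' (hcpos e).ne']
      exact Real.log_le_sub_one_of_pos (div_pos (hv f) (hcpos e))
    have hsum2 : ∑ f ∈ succs e, (Real.log (v f) - Real.log (c e))
        = (∑ f ∈ succs e, Real.log (v f)) - dd e * Real.log (c e) := by
      rw [Finset.sum_sub_distrib, Finset.sum_const, nsmul_eq_mul, hcards]
    have hsum3 : ∑ f ∈ succs e, (v f / c e - 1) = 0 := by
      rw [Finset.sum_sub_distrib, hsum, Finset.sum_const, nsmul_eq_mul, mul_one, hcards,
        sub_self]
    constructor
    · have h4 := Finset.sum_le_sum hterm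
      rw [hsum2, hsum3] at h4
      linarith
    · rintro ⟨f0, hf0, hne'⟩
      have hstrict : Real.log (v f0) - Real.log (c e) < v f0 / c e - 1 := by
        rw [← Real.log_div (hv f0).ne' (hcpos e).ne']
        apply Real.log_lt_sub_one_of_pos (div_pos (hv f0) (hcpos e))
        intro hc1
        rw [div_eq_one_iff_eq (hcpos e).ne'] at hc1
        exact hne' hc1
      have h4 := Finset.sum_lt_sum hterm ⟨f0, hf0, hstrict⟩
      rw [hsum2, hsum3] at h4
      linarith
  -- global balance
  set F : G.Dart → ℝ :=
    fun e => Real.log (c e) - (dd e)⁻¹ * (∑ f ∈ succs e, Real.log (v f)) with hFdef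
  have hF0 : ∀ e, 0 ≤ F e := by
    intro e
    have h4 := (hkey e).1
    have h5 : (dd e)⁻¹ * (∑ f ∈ succs e, Real.log (v f))
        ≤ (dd e)⁻¹ * (dd e * Real.log (c e)) :=
      mul_le_mul_of_nonneg_left h4 (inv_nonneg.mpr (houtpos e).le)
    rw [← mul_assoc, inv_mul_cancel₀ (houtpos e).ne', one_mul] at h5
    rw [hFdef]
    simp only []
    linarith
  have hlogc : ∑ e : G.Dart, Real.log (c e) = ∑ e : G.Dart, Real.log (v e) := by
    have h4 : ∀ e : G.Dart, Real.log (c e)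
        = Real.log Λ + Real.log (v e) - Real.log (dd e) := by
      intro e
      rw [hcdef]
      simp only []
      rw [Real.log_div (mul_pos hΛpos (hv e)).ne' (houtpos e).ne',
        Real.log_mul hΛpos.ne' (hv e).ne']
    rw [Finset.sum_congr rfl (fun e _ => h4 e), Finset.sum_sub_distrib,
      Finset.sum_add_distrib, Finset.sum_const, Finset.card_univ, nsmul_eq_mul, hlogΛ]
    ring
  have hFsum : ∑ e : G.Dart, F e = 0 := by
    rw [hFdef]
    simp only []
    rw [Finset.sum_sub_distrib, hswap, hlogc, sub_self]
  -- rigidity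
  have hrigid : ∀ e : G.Dart, ∀ f ∈ succs e, v f = c e := by
    by_contra hcon
    push_neg at hcon
    obtain ⟨e0, f0, hf0, hne'⟩ := hcon
    have hFe0 : 0 < F e0 := by
      have h4 := (hkey e0).2 ⟨f0, hf0, hne'⟩
      have h5 : (dd e0)⁻¹ * (∑ f ∈ succs e0, Real.log (v f))
          < (dd e0)⁻¹ * (dd e0 * Real.log (c e0)) :=
        mul_lt_mul_of_pos_left h4 (inv_pos.mpr (houtpos e0))
      rw [← mul_assoc, inv_mul_cancel₀ (houtpos e0).ne', one_mul] at h5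
      rw [hFdef]
      simp only []
      linarith
    have h6 : 0 < ∑ e : G.Dart, F e :=
      Finset.sum_pos' (fun e _ => hF0 e) ⟨e0, Finset.mem_univ e0, hFe0⟩
    rw [hFsum] at h6
    exact absurd h6 (lt_irrefl 0)
  -- build the eigenvector of the interpolated matrix
  set w : G.Dart → ℝ := fun e => (v e) ^ t with hwdef
  have hwpos : ∀ e, 0 < w e := fun e => Real.rpow_pos_of_pos (hv e) t
  set Mt : Matrix G.Dart G.Dart ℝ :=
    (fun d e : G.Dart => if Step G d e then (outdeg G d : ℝ) ^ (t - 1) else 0) with hMt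
  have hMt0 : ∀ d e : G.Dart, 0 ≤ Mt d e := by
    intro d e
    rw [hMt]
    simp only []
    split
    · exact Real.rpow_nonneg (houtpos d).le _
    · exact le_refl 0
  have heigw : Mt.mulVec w = (Λ ^ t) • w := by
    funext e
    rw [Matrix.mulVec, dotProduct]
    have h4 : ∑ f, Mt e f * w f = ∑ f ∈ succs e, (dd e) ^ (t - 1) * (v f) ^ t := by
      rw [succs_eq_filter, Finset.sum_filter]
      apply Finset.sum_congr rfl
      intro f _
      rw [hMt, hdd]
      simp only []
      split <;> simp [hwdef]
    have h5 : ∀ f ∈ succs e, (dd e) ^ (t - 1) * (v f) ^ t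
        = (dd e) ^ (t - 1) * (c e) ^ t := by
      intro f hf
      rw [hrigid e f hf]
    have h6 : ((succs e).card : ℝ) = dd e := by rw [card_succs, hdd]
    have h7 : ∑ f ∈ succs e, (dd e) ^ (t - 1) * (c e) ^ t
        = dd e * ((dd e) ^ (t - 1) * (c e) ^ t) := by
      rw [Finset.sum_const, nsmul_eq_mul, h6]
    have h8 : dd e * ((dd e) ^ (t - 1) * (c e) ^ t) = Λ ^ t * (v e) ^ t := by
      have hd1 : dd e * (dd e) ^ (t - 1) = (dd e) ^ t := by
        rw [show dd e * (dd e) ^ (t - 1) = (dd e) ^ (1:ℝ) * (dd e) ^ (t - 1) from by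
            rw [Real.rpow_one],
          ← Real.rpow_add (houtpos e)]
        norm_num
      rw [← mul_assoc, hd1, ← Real.mul_rpow (houtpos e).le (hcpos e).le]
      have h9 : dd e * c e = Λ * v e := by
        rw [hcdef]
        field_simp
        rw [mul_comm, mul_div_assoc, div_self (houtpos e).ne', mul_one]
      rw [h9, Real.mul_rpow hΛpos.le (hv e).le]
    rw [h4, Finset.sum_congr rfl h5, h7, h8]
    simp [hwdef]
  have := perron_eq_of_eig (n := G.Dart) hMt0 hwpos (Real.rpow_nonneg hΛpos.le t) heigw
  rw [hΛdef] at this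
  exact this


end NB
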